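/- arXiv:alg-geom/9603008 — 2 statements merged into one kernel-verified Lean document; each statement's English description precedes it below -/
import Mathlib

section
/- Let R be a commutative ring, let r and i be natural numbers with i ≤ r, let x : Fin r → R be a family of elements of R, and let t ∈ R. Then the i-th elementary symmetric polynomial evaluated at the shifted family satisfies e_i(x_1 + t, …, x_r + t) = ∑_{j=0}^{i} ((r − j) choose (i − j)) · e_j(x_1, …, x_r) · t^{i−j}. In particular, for i = r the coefficient of t^r in e_r(x_1 + t, …, x_r + t) is 1. -/
open Finset

lemma count_supersets (r i : ℕ) (u : Finset (Fin r)) (h : u.card ≤ i) :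
    ((Finset.univ.powersetCard i).filter (fun s => u ⊆ s)).card
      = (r - u.card).choose (i - u.card) := by
  have hc : (uᶜ : Finset (Fin r)).card = r - u.card := by
    simp [Finset.card_compl]
  rw [← hc, ← Finset.card_powersetCard (i - u.card) uᶜ]
  apply Finset.card_bij' (fun s _ => s \ u) (fun v _ => v ∪ u)
  · intro s hs
    rw [Finset.mem_filter, Finset.mem_powersetCard] at hs
    rw [Finset.mem_powersetCard]
    constructor
    · intro a ha
      simp only [Finset.mem_sdiff] at ha
      simp [ha.2]
    · rw [Finset.card_sdiff_of_subset hs.2, hs.1.2]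
  · intro v hv
    rw [Finset.mem_powersetCard] at hv
    have hdisj : Disjoint v u := by
      rw [Finset.disjoint_iff_ne]
      intro a ha b hb
      have := hv.1 ha
      simp only [Finset.mem_compl] at this
      rintro rfl; exact this hb
    rw [Finset.mem_filter, Finset.mem_powersetCard]
    refine ⟨⟨Finset.subset_univ _, ?_⟩, Finset.subset_union_right⟩
    rw [Finset.card_union_of_disjoint hdisj, hv.2]
    omega
  · intro s hs
    rw [Finset.mem_filter] at hs
    exact Finset.sdiff_union_of_subset hs.2
  · intro v hv
    rw [Finset.mem_powersetCard] at hv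
    have hdisj : Disjoint v u := by
      rw [Finset.disjoint_iff_ne]
      intro a ha b hb
      have := hv.1 ha
      simp only [Finset.mem_compl] at this
      rintro rfl; exact this hb
    exact Finset.union_sdiff_cancel_right hdisj

/-- The `i`-th elementary symmetric polynomial of a family shifted by `t`:
`e_i(x_1 + t, …, x_r + t) = ∑_{j=0}^{i} binom(r-j, i-j) · e_j(x) · t^{i-j}`. -/
theorem esymm_shifted_family {R : Type*} [CommRing R] (r i : ℕ) (hi : i ≤ r)
    (x : Fin r → R) (t : R) :
    MvPolynomial.eval (fun j => x j + t) (MvPolynomial.esymm (Fin r) R i) =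
      ∑ j ∈ Finset.range (i + 1),
        (Nat.choose (r - j) (i - j) : R) *
          MvPolynomial.eval x (MvPolynomial.esymm (Fin r) R j) * t ^ (i - j) := by
  classical
  have heval : ∀ (f : Fin r → R) (k : ℕ),
      MvPolynomial.eval f (MvPolynomial.esymm (Fin r) R k)
        = ∑ s ∈ Finset.univ.powersetCard k, ∏ j ∈ s, f j := by
    intro f k
    simp [MvPolynomial.esymm, MvPolynomial.eval_sum, MvPolynomial.eval_prod]
  rw [heval]
  -- expand each product via prod_add
  have step1 : ∀ s ∈ Finset.univ.powersetCard i (α := Fin r),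
      (∏ j ∈ s, (x j + t))
        = ∑ u ∈ s.powerset, (∏ j ∈ u, x j) * t ^ (i - u.card) := by
    intro s hs
    rw [Finset.mem_powersetCard] at hs
    rw [Finset.prod_add]
    refine Finset.sum_congr rfl fun u hu => ?_
    rw [Finset.mem_powerset] at hu
    rw [Finset.prod_const, Finset.card_sdiff_of_subset hu, hs.2]
  rw [Finset.sum_congr rfl step1]
  rw [Finset.sum_comm' (s' := fun u => (Finset.univ.powersetCard i).filter (fun s => u ⊆ s))
      (t' := Finset.univ.powerset)
      (fun s u => by
        simp only [Finset.mem_filter, Finset.mem_powerset]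
        constructor
        · rintro ⟨h1, h2⟩; exact ⟨⟨h1, h2⟩, Finset.subset_univ _⟩
        · rintro ⟨⟨h1, h2⟩, _⟩; exact ⟨h1, h2⟩)]
  simp only [Finset.sum_const, nsmul_eq_mul]
  rw [Finset.sum_powerset]
  rw [Finset.card_univ, Fintype.card_fin]
  rw [← Finset.sum_subset (Finset.range_subset_range.2 (by omega) :
      Finset.range (i + 1) ⊆ Finset.range (r + 1))]
  · refine Finset.sum_congr rfl fun j hj => ?_
    rw [Finset.mem_range] at hj
    have hj' : j ≤ i := by omega
    rw [heval, Finset.mul_sum, Finset.sum_mul]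
    refine Finset.sum_congr rfl fun u hu => ?_
    rw [Finset.mem_powersetCard] at hu
    rw [count_supersets r i u (hu.2 ▸ hj'), hu.2]
    ring
  · intro j hj hj'
    rw [Finset.mem_range] at hj hj'
    apply Finset.sum_eq_zero
    intro u hu
    rw [Finset.mem_powersetCard] at hu
    have : ((Finset.univ.powersetCard i).filter (fun s => u ⊆ s)) = ∅ := by
      rw [Finset.filter_eq_empty_iff]
      intro s hs hsub
      rw [Finset.mem_powersetCard] at hs
      have := Finset.card_le_card hsub
      omega
    rw [this]
    simp
end

section
/- Let k be a field, let T be a group, let n be a natural number, and let χ : Fin n → (T →* kˣ) be a family of homomorphisms from T to the units of k. Let T act on the vector space V = (Fin n → k) by (t • v) i = χ i (t) · v i. Then the set of vectors with nontrivial stabilizer is a finite union of linear subspaces of V; precisely, { v ∈ V : Stab_T(v) ≠ ⊥ } = ⋃_{S} { v ∈ V : v i = 0 for all i ∉ S }, where the union is over those subsets S ⊆ Fin n for which ⨅_{i ∈ S} ker(χ i) is not the trivial subgroup, and each set { v : v i = 0 for all i ∉ S } is a k-linear subspace of V. -/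
/-!
A diagonal element `t` fixes `v` exactly when `χ i t = 1` on the support of `v`, so the
stabilizer of `v` is the intersection of the kernels `ker χ i` over that support. Enlarging the
index set only shrinks the intersection, hence `v` has nontrivial stabilizer iff its support lies
in some `S` whose kernels meet nontrivially, i.e. iff `v` lies in one of the coordinate subspaces
`{v | v i = 0 for i ∉ S}`.
-/

/-- The diagonal action of a group `T` on `Fin n → k` through a family of characters
`χ i : T →* kˣ`, given by `(t • v) i = χ i t * v i`. -/
def diagAction {k : Type*} [Field k] {T : Type*} [Group T] {n : ℕ}
    (χ : Fin n → (T →* kˣ)) : MulAction T (Fin n → k) where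
  smul t v := fun i => ((χ i t : kˣ) : k) * v i
  one_smul v := by
    funext i
    show ((χ i 1 : kˣ) : k) * v i = v i
    simp
  mul_smul t s v := by
    funext i
    show ((χ i (t * s) : kˣ) : k) * v i = ((χ i t : kˣ) : k) * (((χ i s : kˣ) : k) * v i)
    simp [mul_assoc]

section DiagonalStabilizer

variable {k : Type*} [Field k] {T : Type*} [Group T] {n : ℕ} (χ : Fin n → (T →* kˣ))

theorem mem_stabilizer_diagAction_iff (v : Fin n → k) (t : T) :
    t ∈ @MulAction.stabilizer T (Fin n → k) _ (diagAction χ) v ↔ ∀ i, v i ≠ 0 → χ i t = 1 := by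
  change (fun i => ((χ i t : kˣ) : k) * v i) = v ↔ _
  refine funext_iff.trans (forall_congr' fun i => ?_)
  rw [mul_left_eq_self₀, Units.val_eq_one, or_iff_not_imp_right]

theorem stabilizer_diagAction_eq_iInf_ker (v : Fin n → k) :
    @MulAction.stabilizer T (Fin n → k) _ (diagAction χ) v = ⨅ (i) (_ : v i ≠ 0), (χ i).ker := by
  ext t
  simp only [mem_stabilizer_diagAction_iff, Subgroup.mem_iInf, MonoidHom.mem_ker]

end DiagonalStabilizer

/-- For the diagonal action of `T` on `Fin n → k` via characters `χ i`, the locus of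
vectors with nontrivial stabilizer is the finite union, over subsets `S ⊆ Fin n` with
`⨅ i ∈ S, ker (χ i) ≠ ⊥`, of the linear subspaces `{v | v i = 0 for i ∉ S}`;
moreover each such set is a `k`-linear subspace. -/
theorem nontrivial_stabilizer_locus_is_union_of_subspaces
    {k : Type*} [Field k] {T : Type*} [Group T] {n : ℕ}
    (χ : Fin n → (T →* kˣ)) :
    ({ v : Fin n → k | @MulAction.stabilizer T (Fin n → k) _ (diagAction χ) v ≠ ⊥ }
        = ⋃ S ∈ {S : Finset (Fin n) | (⨅ i ∈ S, (χ i).ker) ≠ (⊥ : Subgroup T)},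
            { v : Fin n → k | ∀ i ∉ S, v i = 0 }) ∧
    (∀ S : Finset (Fin n), ∃ W : Submodule k (Fin n → k),
        (W : Set (Fin n → k)) = { v : Fin n → k | ∀ i ∉ S, v i = 0 }) := by
  classical
  refine ⟨?_, fun S => ⟨Submodule.pi (↑Sᶜ : Set (Fin n)) fun _ => ⊥, ?_⟩⟩
  · ext v
    simp only [Set.mem_ofPred_eq, Set.mem_iUnion, exists_prop, stabilizer_diagAction_eq_iInf_ker]
    constructor
    · intro hv
      refine ⟨Finset.univ.filter (v · ≠ 0), ?_, fun i hi => by simpa using hi⟩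
      simpa only [Finset.mem_filter, Finset.mem_univ, true_and] using hv
    · rintro ⟨S, hS, hv⟩
      refine ne_bot_of_le_ne_bot hS (biInf_mono fun i hi => ?_)
      exact not_imp_comm.mp (hv i) hi
  · ext v
    simp only [SetLike.mem_coe, Submodule.mem_pi, Submodule.mem_bot, Set.mem_ofPred_eq,
      Finset.coe_compl, Set.mem_compl_iff]
end
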